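/- Let x ∈ C^3, ω ∈ C with 0 < |ω| ≤ 1, and (a,c) ∈ C^2 \ {0}. If the affine line {(s,p) ∈ C^2 : a·s + c·p = a·(x1 + ω·x2) + c·ω·x3} is disjoint from G_{2,|ω|}, then the hyperplane {y ∈ C^3 : a·y1 + a·ω·y2 + c·ω·y3 = a·x1 + a·ω·x2 + c·ω·x3} is disjoint from E. -/

import Mathlib

open Complex

def tetrablockE : Set (ℂ × ℂ × ℂ) :=
  {x | ‖x.1 - (starRingEnd ℂ) x.2.1 * x.2.2‖ +
       ‖x.2.1 - (starRingEnd ℂ) x.1 * x.2.2‖ +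
       (‖x.2.2‖) ^ 2 < 1}

def Drho (ρ : ℝ) : Set (ℂ × ℂ) :=
  {z | ‖z.1‖ < 1 ∧ ‖z.2‖ < 1 ∧ ‖z.1 * z.2‖ < ρ}

def G2rho (ρ : ℝ) : Set (ℂ × ℂ) :=
  (fun z : ℂ × ℂ => (z.1 + z.2, z.1 * z.2)) '' Drho ρ

/-!
The linear map `π_ω y = (y₁ + ω y₂, ω y₃)` sends the tetrablock into `G_{2,|ω|}`, and the
hyperplane is the preimage of the line under `π_ω`. For `(s, p) = π_ω y` one has
`|p| = |ω| |y₃| < |ω|`, and `s - s̄ p = |ω|² (y₁ - ȳ₂ y₃) + (1 - |ω|²) y₁ + ω (y₂ - ȳ₁ y₃)`;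
together with `|y₁| (1 - |y₃|²) ≤ |y₁ - ȳ₂ y₃| + |y₃| |y₂ - ȳ₁ y₃|` this gives
`|s - s̄ p| + |p|² < 1`, which forces both roots of `z² - s z + p` into the unit disc.
-/

open ComplexConjugate

open Polynomial in
theorem exists_add_eq_and_mul_eq {K : Type*} [Field K] [IsAlgClosed K] (s p : K) :
    ∃ l m : K, l + m = s ∧ l * m = p := by
  obtain ⟨l, hl⟩ := IsAlgClosed.exists_root (C 1 * X ^ 2 + C (-s) * X + C p)
    (by rw [degree_quadratic one_ne_zero]; decide)
  refine ⟨l, s - l, by ring, ?_⟩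
  simp only [IsRoot, eval_add, eval_mul, eval_C, eval_pow, eval_X] at hl
  linear_combination -hl

theorem add_sub_conj_add_mul_mul (l m : ℂ) :
    l + m - conj (l + m) * (l * m) = (1 - ‖m‖ ^ 2 : ℝ) * l + (1 - ‖l‖ ^ 2 : ℝ) * m := by
  push_cast
  rw [map_add]
  linear_combination (-m) * Complex.mul_conj' l - l * Complex.mul_conj' m

theorem norm_lt_one_of_norm_sub_conj_mul_add_sq_lt_one {l m : ℂ}
    (h : ‖l + m - conj (l + m) * (l * m)‖ + ‖l * m‖ ^ 2 < 1) : ‖l‖ < 1 := by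
  by_contra! hl
  rw [norm_mul] at h
  have hlm : ‖l‖ * ‖m‖ < 1 := by nlinarith [norm_nonneg (l + m - conj (l + m) * (l * m))]
  have hm : ‖m‖ < 1 := by nlinarith
  have hreverse :=
    norm_sub_le_norm_add (((1 - ‖m‖ ^ 2 : ℝ) : ℂ) * l) (((1 - ‖l‖ ^ 2 : ℝ) : ℂ) * m)
  rw [← add_sub_conj_add_mul_mul, norm_mul, norm_mul, Complex.norm_real, Complex.norm_real,
    Real.norm_of_nonneg (by nlinarith [norm_nonneg m]), Real.norm_of_nonpos (by nlinarith)]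
    at hreverse
  -- `1 - L (1 - M²) - M (L² - 1) - L²M² = -(L - 1)(1 - M)(1 - LM)`
  nlinarith [mul_nonneg (mul_nonneg (sub_nonneg.2 hl) (sub_nonneg.2 hm.le)) (sub_nonneg.2 hlm.le)]

theorem mk_mem_G2rho {s p : ℂ} {ρ : ℝ} (h : ‖s - conj s * p‖ + ‖p‖ ^ 2 < 1)
    (hp : ‖p‖ < ρ) : (s, p) ∈ G2rho ρ := by
  obtain ⟨l, m, rfl, rfl⟩ := exists_add_eq_and_mul_eq s p
  have h' : ‖m + l - conj (m + l) * (m * l)‖ + ‖m * l‖ ^ 2 < 1 := by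
    rwa [add_comm m, mul_comm m]
  exact ⟨(l, m), ⟨norm_lt_one_of_norm_sub_conj_mul_add_sq_lt_one h,
    norm_lt_one_of_norm_sub_conj_mul_add_sq_lt_one h', hp⟩, rfl⟩

theorem norm_le_norm_sub_conj_mul_add (a b c : ℂ) :
    ‖a‖ ≤ ‖a - conj b * c‖ + ‖b‖ * ‖c‖ := by
  calc ‖a‖ = ‖(a - conj b * c) + conj b * c‖ := by rw [sub_add_cancel]
    _ ≤ ‖a - conj b * c‖ + ‖b‖ * ‖c‖ := by
      rw [← Complex.norm_conj b, ← norm_mul]; exact norm_add_le _ _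

theorem norm_fst_mul_one_sub_sq_le (y : ℂ × ℂ × ℂ) :
    ‖y.1‖ * (1 - ‖y.2.2‖ ^ 2) ≤
      ‖y.1 - conj y.2.1 * y.2.2‖ + ‖y.2.2‖ * ‖y.2.1 - conj y.1 * y.2.2‖ := by
  nlinarith [norm_le_norm_sub_conj_mul_add y.1 y.2.1 y.2.2,
    norm_le_norm_sub_conj_mul_add y.2.1 y.1 y.2.2, norm_nonneg y.2.2]

theorem norm_sub_conj_mul_le (ω : ℂ) (hω : ‖ω‖ ≤ 1) (y : ℂ × ℂ × ℂ) :
    ‖y.1 + ω * y.2.1 - conj (y.1 + ω * y.2.1) * (ω * y.2.2)‖ ≤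
      ‖ω‖ ^ 2 * ‖y.1 - conj y.2.1 * y.2.2‖ + (1 - ‖ω‖ ^ 2) * ‖y.1‖ +
        ‖ω‖ * ‖y.2.1 - conj y.1 * y.2.2‖ := by
  have hsplit : y.1 + ω * y.2.1 - conj (y.1 + ω * y.2.1) * (ω * y.2.2) =
      (‖ω‖ ^ 2 : ℝ) * (y.1 - conj y.2.1 * y.2.2) + (1 - ‖ω‖ ^ 2 : ℝ) * y.1 +
        ω * (y.2.1 - conj y.1 * y.2.2) := by
    push_cast
    rw [map_add, map_mul]
    linear_combination (-(conj y.2.1 * y.2.2)) * Complex.mul_conj' ω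
  rw [hsplit]
  refine (norm_add₃_le ..).trans_eq ?_
  rw [norm_mul, norm_mul, norm_mul, Complex.norm_real, Complex.norm_real,
    Real.norm_of_nonneg (by positivity), Real.norm_of_nonneg (by nlinarith [norm_nonneg ω])]

theorem lt_one_of_tetrablock_bounds {A B t u r : ℝ} (hA : 0 ≤ A) (hB : 0 ≤ B)
    (hr0 : 0 ≤ r) (hr1 : r ≤ 1) (hE : A + B + t ^ 2 < 1) (hu : u * (1 - t ^ 2) ≤ A + t * B) :
    r ^ 2 * A + (1 - r ^ 2) * u + r * B + (r * t) ^ 2 < 1 := by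
  have ht1 : t < 1 := by nlinarith
  have hr2 : 0 ≤ 1 - r ^ 2 := by nlinarith
  have hrt : 0 ≤ 1 - r * t := by nlinarith
  have hcert : 0 < (1 - t ^ 2) * (1 - (r ^ 2 * A + (1 - r ^ 2) * u + r * B + (r * t) ^ 2)) := by
    have h₁ := mul_nonneg hr2 (sub_nonneg.2 hu)
    have h₂ := mul_pos (show 0 < 1 - (r * t) ^ 2 by nlinarith)
      (show 0 < 1 - t ^ 2 - A - B by linarith)
    have h₃ := mul_nonneg (mul_nonneg hB hrt)
      (mul_nonneg (sub_nonneg.2 hr1) (sub_nonneg.2 ht1.le))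
    linear_combination h₁ + h₂ + h₃
  exact sub_pos.1 (pos_of_mul_pos_right hcert (by nlinarith))

theorem mem_G2rho_of_mem_tetrablockE {ω : ℂ} (hω0 : 0 < ‖ω‖) (hω1 : ‖ω‖ ≤ 1)
    {y : ℂ × ℂ × ℂ} (hy : y ∈ tetrablockE) :
    (y.1 + ω * y.2.1, ω * y.2.2) ∈ G2rho ‖ω‖ := by
  rw [tetrablockE, Set.mem_ofPred_eq] at hy
  have ht : ‖y.2.2‖ < 1 := by
    nlinarith [norm_nonneg (y.1 - conj y.2.1 * y.2.2), norm_nonneg (y.2.1 - conj y.1 * y.2.2)]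
  refine mk_mem_G2rho ?_ (by rw [norm_mul]; nlinarith)
  rw [norm_mul, mul_pow]
  have := lt_one_of_tetrablock_bounds (norm_nonneg _) (norm_nonneg _) hω0.le hω1
    hy (norm_fst_mul_one_sub_sq_le y)
  linarith [norm_sub_conj_mul_le ω hω1 y]

theorem line_disjoint_implies_hyperplane_disjoint_general
    (x : ℂ × ℂ × ℂ) (ω : ℂ) (hω0 : 0 < ‖ω‖) (hω1 : ‖ω‖ ≤ 1)
    (a c : ℂ)
    (h : ∀ sp : ℂ × ℂ, a * sp.1 + c * sp.2 = a * (x.1 + ω * x.2.1) + c * (ω * x.2.2) →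
      sp ∉ G2rho ‖ω‖) :
    ∀ y : ℂ × ℂ × ℂ,
      a * y.1 + a * ω * y.2.1 + c * ω * y.2.2 =
        a * x.1 + a * ω * x.2.1 + c * ω * x.2.2 →
      y ∉ tetrablockE :=
  fun y hy hyE ↦ h _ (by linear_combination hy) (mem_G2rho_of_mem_tetrablockE hω0 hω1 hyE)

theorem line_disjoint_implies_hyperplane_disjoint
    (x : ℂ × ℂ × ℂ) (ω : ℂ) (hω0 : 0 < ‖ω‖) (hω1 : ‖ω‖ ≤ 1)
    (a c : ℂ) (hac : (a, c) ≠ (0, 0))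
    (h : ∀ sp : ℂ × ℂ, a * sp.1 + c * sp.2 = a * (x.1 + ω * x.2.1) + c * (ω * x.2.2) →
      sp ∉ G2rho ‖ω‖) :
    ∀ y : ℂ × ℂ × ℂ,
      a * y.1 + a * ω * y.2.1 + c * ω * y.2.2 =
        a * x.1 + a * ω * x.2.1 + c * ω * x.2.2 →
      y ∉ tetrablockE :=
  line_disjoint_implies_hyperplane_disjoint_general x ω hω0 hω1 a c h
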